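/- Let p ∈ C be continuous, u0 ∈ C, α(τ) = Σ_{i≥0} (u0 * p^{*(i)})(τ), and A(τ) = ∫_0^τ α(s) ds. Assume A is a strictly increasing continuous bijection of [0,∞) onto [0,∞), and let τ(·) = A^{-1}. Then the initial data satisfies the identity û0(q) = (1 − p̂(q)) ∫_0^∞ e^{-q τ(s)} ds for every complex q with Re q > 0. -/

import Mathlib

open MeasureTheory Set Filter Topology

/-- The class `𝒞` of positive, `C¹`, integrable probability densities on
`ℝ₊ = [0,∞)` vanishing at infinity. -/
def MemC (f : ℝ → ℝ) : Prop :=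
  ContDiffOn ℝ 1 f (Set.Ici 0) ∧ MeasureTheory.IntegrableOn f (Set.Ici 0) ∧
    (∀ x ∈ Set.Ici (0 : ℝ), 0 < f x) ∧ (∫ x in Set.Ici (0 : ℝ), f x) = 1 ∧
    Filter.Tendsto f Filter.atTop (nhds 0)

/-- `renewalTerm p u0 i = u0 * p^{*(i)}`, the `i`-fold convolution of the
holding time density `p` with the initial density `u0` (convention
`u0 * p^{*(0)} = u0`), where `(f * g)(τ) = ∫_0^τ f(τ-s) g(s) ds`. -/
noncomputable def renewalTerm (p u0 : ℝ → ℝ) : ℕ → ℝ → ℝ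
  | 0 => u0
  | (i + 1) => fun τ => ∫ s in (0 : ℝ)..τ, p (τ - s) * renewalTerm p u0 i s

/-- The renewal density `α(τ) = Σ_{i≥0} (u0 * p^{*(i)})(τ)`. -/
noncomputable def renewalDensity (p u0 : ℝ → ℝ) (τ : ℝ) : ℝ :=
  ∑' i : ℕ, renewalTerm p u0 i τ

/-- A strong solution of the Kolmogorov forward equation for residual times:
`u ∈ C¹(ℝ₊ × ℝ₊; ℝ₊)`, `u(·,0) ∈ 𝒞`, and
`∂_τ u(x,τ) − ∂_x u(x,τ) = p(x) u(0,τ)` for all `x, τ ≥ 0`. -/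
def IsStrongSolution (p : ℝ → ℝ) (u : ℝ → ℝ → ℝ) : Prop :=
  ContDiffOn ℝ 1 (fun z : ℝ × ℝ => u z.1 z.2) (Set.Ici 0 ×ˢ Set.Ici 0) ∧
  (∀ x ∈ Set.Ici (0 : ℝ), ∀ τ ∈ Set.Ici (0 : ℝ), 0 ≤ u x τ) ∧
  MemC (fun x => u x 0) ∧
  (∀ x ∈ Set.Ici (0 : ℝ), ∀ τ ∈ Set.Ici (0 : ℝ),
    derivWithin (fun t => u x t) (Set.Ici 0) τ
      - derivWithin (fun y => u y τ) (Set.Ici 0) x = p x * u 0 τ)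


/-- The Laplace transform `f̂(q) = ∫_0^∞ e^{-qx} f(x) dx` of a function on
`ℝ₊ = [0,∞)`, for complex `q`. -/
noncomputable def laplaceFn (f : ℝ → ℝ) (q : ℂ) : ℂ :=
  ∫ x in Set.Ici (0 : ℝ), Complex.exp (-q * (x : ℂ)) * (f x : ℂ)

/-- `A(τ) = ∫_0^τ α(s) ds`, the expected number of renewals up to time `τ`. -/
noncomputable def renewalFn (p u0 : ℝ → ℝ) (τ : ℝ) : ℝ :=
  ∫ s in (0 : ℝ)..τ, renewalDensity p u0 s



open scoped Convolution Complex

/-!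
Summing the geometric series of Laplace transforms of the convolution powers gives
`α̂ = û₀ / (1 - p̂)`, because `‖p̂(q)‖ < 1` when `Re q > 0`. On the other hand `τ(·)` pushes
Lebesgue measure on `[0, ∞)` forward to `α(t) dt`, both measures giving `(-∞, x]` the mass `A(x)`;
hence `∫₀^∞ e^{-q τ(s)} ds = ∫₀^∞ e^{-q t} α(t) dt = α̂(q)`.
-/

section Laplace

variable {f g : ℝ → ℝ} {q : ℂ}

theorem norm_cexp_neg_mul_ofReal (q : ℂ) (x y : ℝ) :
    ‖cexp (-q * x) * y‖ = Real.exp (-q.re * x) * |y| := by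
  rw [norm_mul, Complex.norm_exp, Complex.norm_real, Real.norm_eq_abs]
  simp [Complex.mul_re]

theorem integrableOn_cexp_neg_mul (hf : IntegrableOn f (Ici 0)) (hq : 0 ≤ q.re) :
    IntegrableOn (fun x : ℝ => cexp (-q * x) * f x) (Ici 0) := by
  refine hf.norm.mono' ((Complex.continuous_exp.comp (by fun_prop)).aestronglyMeasurable.mul
    (Complex.continuous_ofReal.comp_aestronglyMeasurable hf.aestronglyMeasurable)) ?_
  filter_upwards [ae_restrict_mem measurableSet_Ici] with x hx
  rw [norm_cexp_neg_mul_ofReal, Real.norm_eq_abs]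
  exact mul_le_of_le_one_left (abs_nonneg _)
    (Real.exp_le_one_iff.mpr (by nlinarith [hx.out]))

theorem laplaceFn_indicator (f : ℝ → ℝ) (q : ℂ) :
    laplaceFn ((Ici 0).indicator f) q = laplaceFn f q :=
  setIntegral_congr_fun measurableSet_Ici fun x hx => by rw [indicator_of_mem hx]

theorem indicator_cexp_neg_mul (f : ℝ → ℝ) (q : ℂ) :
    (Ici 0).indicator (fun x : ℝ => cexp (-q * x) * f x)
      = fun x : ℝ => cexp (-q * x) * ((Ici 0).indicator f x : ℝ) := by
  ext x
  by_cases hx : x ∈ Ici 0 <;> simp [hx]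

theorem laplaceFn_eq_integral_indicator (f : ℝ → ℝ) (q : ℂ) :
    laplaceFn f q = ∫ x : ℝ, cexp (-q * x) * ((Ici 0).indicator f x : ℝ) := by
  rw [laplaceFn, ← integral_indicator measurableSet_Ici, indicator_cexp_neg_mul]

theorem setIntegral_norm_cexp_neg_mul (hf : ∀ x ∈ Ici (0 : ℝ), 0 ≤ f x) (q : ℂ) :
    ∫ x in Ici (0 : ℝ), ‖cexp (-q * x) * f x‖ = ‖laplaceFn f q.re‖ := by
  have hre : laplaceFn f q.re = ((∫ x in Ici (0 : ℝ), Real.exp (-q.re * x) * f x : ℝ) : ℂ) := by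
    rw [laplaceFn, ← integral_complex_ofReal]
    congr 1 with x
    push_cast [Complex.ofReal_exp]
    rfl
  have hnorm : ∀ x ∈ Ici (0 : ℝ), ‖cexp (-q * x) * f x‖ = Real.exp (-q.re * x) * f x :=
    fun x hx => by rw [norm_cexp_neg_mul_ofReal, abs_of_nonneg (hf x hx)]
  rw [setIntegral_congr_fun measurableSet_Ici hnorm, hre, Complex.norm_real, Real.norm_eq_abs,
    abs_of_nonneg (setIntegral_nonneg measurableSet_Ici fun x hx =>
      mul_nonneg (Real.exp_nonneg _) (hf x hx))]

theorem norm_laplaceFn_lt_one (hfi : IntegrableOn f (Ici 0)) (hfpos : ∀ x ∈ Ici (0 : ℝ), 0 < f x)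
    (hf1 : ∫ x in Ici (0 : ℝ), f x = 1) (hq : 0 < q.re) : ‖laplaceFn f q‖ < 1 := by
  have hgap : ∀ x ∈ Ici (0 : ℝ),
      f x - ‖cexp (-q * x) * f x‖ = (1 - Real.exp (-q.re * x)) * f x :=
    fun x hx => by rw [norm_cexp_neg_mul_ofReal, abs_of_pos (hfpos x hx)]; ring
  have hnorm := (integrableOn_cexp_neg_mul hfi hq.le).norm
  refine (norm_integral_le_integral_norm _).trans_lt ?_
  rw [← sub_pos, ← hf1, ← integral_sub hfi hnorm]
  refine (setIntegral_pos_iff_support_of_nonneg_ae ?_ (hfi.sub hnorm)).mpr ?_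
  · filter_upwards [ae_restrict_mem measurableSet_Ici] with x hx
    rw [Pi.zero_apply, Pi.sub_apply, hgap x hx]
    exact mul_nonneg (sub_nonneg.mpr (Real.exp_le_one_iff.mpr (by nlinarith [hx.out])))
      (hfpos x hx).le
  · refine lt_of_lt_of_le (by simp) (measure_mono (s := Ioi 0) fun x (hx : 0 < x) => ⟨?_, hx.le⟩)
    rw [Function.mem_support, Pi.sub_apply, hgap x hx.le]
    exact mul_ne_zero (sub_ne_zero.mpr (Real.exp_lt_one_iff.mpr (by nlinarith)).ne')
      (hfpos x hx.le).ne'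

theorem cexp_mul_convolution (f g : ℝ → ℝ) (q : ℂ) :
    (fun t : ℝ => cexp (-q * t) * f t) ⋆[ContinuousLinearMap.mul ℂ ℂ]
        (fun t : ℝ => cexp (-q * t) * g t)
      = fun x : ℝ => cexp (-q * x) * ((f ⋆[ContinuousLinearMap.mul ℝ ℝ] g) x : ℝ) := by
  ext x
  rw [convolution_mul, convolution_mul, ← integral_complex_ofReal, ← integral_const_mul]
  congr 1 with t
  have hexp : cexp (-q * t) * cexp (-q * (x - t)) = cexp (-q * x) := by
    rw [← Complex.exp_add]; ring_nf
  push_cast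
  linear_combination (f t * g (x - t) : ℂ) * hexp

theorem support_indicator_convolution_subset (f g : ℝ → ℝ) :
    Function.support ((Ici 0).indicator f ⋆[ContinuousLinearMap.mul ℝ ℝ] (Ici 0).indicator g)
      ⊆ Ici 0 :=
  (support_convolution_subset ..).trans <|
    (add_subset_add support_indicator_subset support_indicator_subset).trans
      (by simpa using Ici_add_Ici_subset (0 : ℝ) 0)

theorem laplaceFn_indicator_convolution (hf : IntegrableOn f (Ici 0)) (hg : IntegrableOn g (Ici 0))
    (hq : 0 ≤ q.re) :
    laplaceFn ((Ici 0).indicator f ⋆[ContinuousLinearMap.mul ℝ ℝ] (Ici 0).indicator g) q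
      = laplaceFn f q * laplaceFn g q := by
  have hint : ∀ {h : ℝ → ℝ}, IntegrableOn h (Ici 0) →
      Integrable fun x : ℝ => cexp (-q * x) * ((Ici 0).indicator h x : ℝ) := fun hh => by
    rw [← indicator_cexp_neg_mul]
    exact (integrableOn_cexp_neg_mul hh hq).integrable_indicator measurableSet_Ici
  rw [laplaceFn_eq_integral_indicator,
    indicator_eq_self.mpr (support_indicator_convolution_subset f g), ← cexp_mul_convolution,
    integral_convolution _ (hint hf) (hint hg), laplaceFn_eq_integral_indicator f,
    laplaceFn_eq_integral_indicator g]
  rfl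

end Laplace

section Renewal

variable {p u0 : ℝ → ℝ}

theorem indicator_renewalTerm_succ (p u0 : ℝ → ℝ) (i : ℕ) :
    (Ici 0).indicator (renewalTerm p u0 (i + 1))
      = (Ici 0).indicator p ⋆[ContinuousLinearMap.mul ℝ ℝ]
          (Ici 0).indicator (renewalTerm p u0 i) := by
  ext τ
  rcases lt_or_ge τ 0 with hτ | hτ
  · rw [indicator_of_notMem (notMem_Ici.mpr hτ)]
    exact (Function.notMem_support.mp fun h =>
      not_le.mpr hτ (support_indicator_convolution_subset _ _ h)).symm
  rw [indicator_of_mem (mem_Ici.mpr hτ), convolution_mul_swap]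
  dsimp only [renewalTerm]
  rw [intervalIntegral.integral_of_le hτ, ← integral_Icc_eq_integral_Ioc,
    ← setIntegral_eq_integral_of_forall_compl_eq_zero (s := Icc 0 τ)
      (f := fun s => (Ici 0).indicator p (τ - s) * (Ici 0).indicator (renewalTerm p u0 i) s)
      fun s hs => ?_]
  · refine setIntegral_congr_fun measurableSet_Icc fun s hs => ?_
    rw [indicator_of_mem (mem_Ici.mpr (sub_nonneg.mpr hs.2)),
      indicator_of_mem (mem_Ici.mpr hs.1)]
  rcases lt_or_ge s 0 with h | h
  · rw [indicator_of_notMem (notMem_Ici.mpr h), mul_zero]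
  · rw [indicator_of_notMem fun h' => hs ⟨h, sub_nonneg.mp (mem_Ici.mp h')⟩, zero_mul]

theorem integrableOn_renewalTerm (hp : IntegrableOn p (Ici 0)) (hu0 : IntegrableOn u0 (Ici 0)) :
    ∀ i, IntegrableOn (renewalTerm p u0 i) (Ici 0)
  | 0 => hu0
  | i + 1 => by
    rw [← integrable_indicator_iff measurableSet_Ici, indicator_renewalTerm_succ]
    exact (hp.integrable_indicator measurableSet_Ici).integrable_convolution _
      ((integrableOn_renewalTerm hp hu0 i).integrable_indicator measurableSet_Ici)

theorem renewalTerm_nonneg (hp : ∀ x ∈ Ici (0 : ℝ), 0 ≤ p x)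
    (hu0 : ∀ x ∈ Ici (0 : ℝ), 0 ≤ u0 x) :
    ∀ i, ∀ t ∈ Ici (0 : ℝ), 0 ≤ renewalTerm p u0 i t
  | 0 => hu0
  | i + 1 => fun _ ht => intervalIntegral.integral_nonneg ht.out fun s hs =>
    mul_nonneg (hp _ (sub_nonneg.mpr hs.2)) (renewalTerm_nonneg hp hu0 i s hs.1)

theorem laplaceFn_renewalTerm (hp : IntegrableOn p (Ici 0)) (hu0 : IntegrableOn u0 (Ici 0))
    {q : ℂ} (hq : 0 ≤ q.re) :
    ∀ i, laplaceFn (renewalTerm p u0 i) q = laplaceFn p q ^ i * laplaceFn u0 q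
  | 0 => by rw [pow_zero, one_mul]; rfl
  | i + 1 => by
    rw [← laplaceFn_indicator, indicator_renewalTerm_succ,
      laplaceFn_indicator_convolution hp (integrableOn_renewalTerm hp hu0 i) hq,
      laplaceFn_renewalTerm hp hu0 hq i, pow_succ']
    ring

theorem hasSum_laplaceFn_renewalTerm
    (hp : IntegrableOn p (Ici 0)) (hu0 : IntegrableOn u0 (Ici 0))
    (hp0 : ∀ x ∈ Ici (0 : ℝ), 0 ≤ p x) (hu00 : ∀ x ∈ Ici (0 : ℝ), 0 ≤ u0 x)
    {q : ℂ} (hq : 0 ≤ q.re) (hpq : ‖laplaceFn p q.re‖ < 1) :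
    HasSum (fun i => laplaceFn (renewalTerm p u0 i) q) (laplaceFn (renewalDensity p u0) q) := by
  have hnorm : ∀ i, ∫ x in Ici (0 : ℝ), ‖cexp (-q * x) * renewalTerm p u0 i x‖
      = ‖laplaceFn p q.re‖ ^ i * ‖laplaceFn u0 q.re‖ := fun i => by
    rw [setIntegral_norm_cexp_neg_mul (renewalTerm_nonneg hp0 hu00 i),
      laplaceFn_renewalTerm hp hu0 (by simpa using hq) i, norm_mul, norm_pow]
  have hsum := hasSum_integral_of_summable_integral_norm (μ := volume.restrict (Ici 0))
    (F := fun i (x : ℝ) => cexp (-q * x) * renewalTerm p u0 i x)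
    (fun i => integrableOn_cexp_neg_mul (integrableOn_renewalTerm hp hu0 i) hq)
    (by simpa only [hnorm] using (summable_geometric_of_lt_one (norm_nonneg _) hpq).mul_right _)
  have hdensity : laplaceFn (renewalDensity p u0) q
      = ∫ x in Ici (0 : ℝ), ∑' i, cexp (-q * x) * renewalTerm p u0 i x := by
    simp only [laplaceFn, renewalDensity, Complex.ofReal_tsum, tsum_mul_left]
  rw [hdensity]
  exact hsum

end Renewal

section ChangeOfVariables

variable {α τ : ℝ → ℝ}

/- A non-integrable `α` would give the junk value `∫ t in 0..x, α t = 0 = ∫ t in 0..0, α t`. -/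
theorem intervalIntegrable_of_strictMonoOn_integral
    (hA : StrictMonoOn (fun x => ∫ t in (0 : ℝ)..x, α t) (Ici 0)) {x : ℝ} (hx : 0 ≤ x) :
    IntervalIntegrable α volume 0 x := by
  rcases hx.eq_or_lt with rfl | hx
  · exact .refl
  by_contra h
  simpa [intervalIntegral.integral_undef h] using hA self_mem_Ici hx.le hx

theorem locallyIntegrableOn_Ici_of_strictMonoOn_integral
    (hA : StrictMonoOn (fun x => ∫ t in (0 : ℝ)..x, α t) (Ici 0)) :
    LocallyIntegrableOn α (Ici 0) := by
  rw [locallyIntegrableOn_iff isClosed_Ici.isLocallyClosed]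
  intro k hk hkc
  obtain ⟨b, hb⟩ := hkc.bddAbove
  have hb0 : 0 ≤ max b 0 := le_max_right b 0
  exact ((intervalIntegrable_iff_integrableOn_Icc_of_le hb0).mp
    (intervalIntegrable_of_strictMonoOn_integral hA hb0)).mono_set
    fun y hy => ⟨hk hy, (hb hy).trans (le_max_left b 0)⟩

section Inverse

variable {A : ℝ → ℝ} (hA : StrictMonoOn A (Ici 0)) (hτ : ∀ s ∈ Ici (0 : ℝ), τ s ∈ Ici (0 : ℝ))
  (hAτ : ∀ s ∈ Ici (0 : ℝ), A (τ s) = s)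
include hA hτ hAτ

theorem rightInverse_le_iff {s x : ℝ} (hs : 0 ≤ s) (hx : 0 ≤ x) : τ s ≤ x ↔ s ≤ A x := by
  rw [← hA.le_iff_le (hτ s hs) hx, hAτ s hs]

theorem monotoneOn_rightInverse : MonotoneOn τ (Ici 0) := fun s hs s' hs' h => by
  rwa [rightInverse_le_iff hA hτ hAτ hs (hτ s' hs'), hAτ s' hs']

theorem aemeasurable_rightInverse : AEMeasurable τ (volume.restrict (Ici 0)) :=
  aemeasurable_restrict_of_monotoneOn measurableSet_Ici (monotoneOn_rightInverse hA hτ hAτ)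

end Inverse

section Integral

variable (hα0 : ∀ t ∈ Ici (0 : ℝ), 0 ≤ α t)
  (hA : StrictMonoOn (fun x => ∫ t in (0 : ℝ)..x, α t) (Ici 0))
  (hτ : ∀ s ∈ Ici (0 : ℝ), τ s ∈ Ici (0 : ℝ))
  (hAτ : ∀ s ∈ Ici (0 : ℝ), ∫ t in (0 : ℝ)..τ s, α t = s)
include hα0 hA hτ hAτ

theorem map_restrict_Ici_eq_withDensity :
    (volume.restrict (Ici 0)).map τ
      = (volume.restrict (Ici 0)).withDensity fun t => ENNReal.ofReal (α t) := by
  have hτm := aemeasurable_rightInverse hA hτ hAτ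
  have hloc := locallyIntegrableOn_Ici_of_strictMonoOn_integral hA
  have hmap : ∀ x, (volume.restrict (Ici 0)).map τ (Iic x)
      = ENNReal.ofReal (∫ t in Icc 0 x, α t) := by
    intro x
    rw [Measure.map_apply_of_aemeasurable hτm measurableSet_Iic,
      Measure.restrict_apply' measurableSet_Ici]
    rcases lt_or_ge x 0 with hx | hx
    · have : τ ⁻¹' Iic x ∩ Ici 0 = ∅ := eq_empty_of_forall_notMem fun s hs =>
        not_le.mpr hx ((hτ s hs.2).out.trans hs.1)
      rw [this, Icc_eq_empty (not_le.mpr hx), Measure.restrict_empty, integral_zero_measure,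
        ENNReal.ofReal_zero, measure_empty]
    · have : τ ⁻¹' Iic x ∩ Ici 0 = Icc 0 (∫ t in (0 : ℝ)..x, α t) := by
        ext s
        simp only [mem_inter_iff, mem_preimage, mem_Iic, mem_Ici, mem_Icc]
        exact ⟨fun h => ⟨h.2, (rightInverse_le_iff hA hτ hAτ h.2 hx).mp h.1⟩,
          fun h => ⟨(rightInverse_le_iff hA hτ hAτ h.1 hx).mpr h.2, h.1⟩⟩
      rw [this, Real.volume_Icc, sub_zero, intervalIntegral.integral_of_le hx,
        integral_Icc_eq_integral_Ioc]
  have hdens : ∀ x,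
      (volume.restrict (Ici 0)).withDensity (fun t => ENNReal.ofReal (α t)) (Iic x)
        = ENNReal.ofReal (∫ t in Icc 0 x, α t) := by
    intro x
    rw [withDensity_apply _ measurableSet_Iic, Measure.restrict_restrict measurableSet_Iic,
      Iic_inter_Ici, ofReal_integral_eq_lintegral_ofReal]
    · exact hloc.integrableOn_compact_subset (fun t ht => ht.1) isCompact_Icc
    · exact (ae_restrict_mem measurableSet_Icc).mono fun t ht => hα0 t ht.1
  refine Measure.ext_of_generateFrom_of_iUnion (range Iic) (fun n : ℕ => Iic (n : ℝ))
    (BorelSpace.measurable_eq.trans (borel_eq_generateFrom_Iic ℝ)) isPiSystem_Iic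
    (eq_univ_of_forall fun x => mem_iUnion.2 ⟨⌈x⌉₊, Nat.le_ceil x⟩) (fun n => ⟨n, rfl⟩)
    (fun n => by rw [hmap]; exact ENNReal.ofReal_ne_top) ?_
  rintro _ ⟨x, rfl⟩
  rw [hmap, hdens]

theorem setIntegral_comp_rightInverse {E : Type*} [NormedAddCommGroup E] [NormedSpace ℝ E]
    {g : ℝ → E} (hg : StronglyMeasurable g) :
    ∫ s in Ici 0, g (τ s) = ∫ t in Ici 0, α t • g t := by
  have hτm := aemeasurable_rightInverse hA hτ hAτ
  have hαm : AEMeasurable α (volume.restrict (Ici 0)) :=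
    (locallyIntegrableOn_Ici_of_strictMonoOn_integral hA).aestronglyMeasurable.aemeasurable
  rw [← integral_map hτm hg.aestronglyMeasurable, map_restrict_Ici_eq_withDensity hα0 hA hτ hAτ,
    integral_withDensity_eq_integral_toReal_smul₀ hαm.ennreal_ofReal
      (.of_forall fun _ => ENNReal.ofReal_lt_top)]
  exact setIntegral_congr_fun measurableSet_Ici fun t ht => by
    rw [ENNReal.toReal_ofReal (hα0 t ht)]

end Integral

end ChangeOfVariables

theorem stmt8_general (p u0 : ℝ → ℝ) (hp : MemC p)
    (hu0 : MemC u0)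
    (hmono : StrictMonoOn (renewalFn p u0) (Set.Ici 0))
    (τinv : ℝ → ℝ) (hmaps : ∀ t ∈ Set.Ici (0 : ℝ), τinv t ∈ Set.Ici (0 : ℝ))
    (hinv₂ : ∀ t ∈ Set.Ici (0 : ℝ), renewalFn p u0 (τinv t) = t) :
    ∀ q : ℂ, 0 < q.re →
      laplaceFn u0 q
        = (1 - laplaceFn p q)
            * ∫ s in Set.Ici (0 : ℝ), Complex.exp (-q * ((τinv s : ℝ) : ℂ)) := by
  intro q hq
  obtain ⟨-, hpi, hppos, hp1, -⟩ := hp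
  obtain ⟨-, hui, hupos, -, -⟩ := hu0
  have hp0 : ∀ x ∈ Ici (0 : ℝ), 0 ≤ p x := fun x hx => (hppos x hx).le
  have hu00 : ∀ x ∈ Ici (0 : ℝ), 0 ≤ u0 x := fun x hx => (hupos x hx).le
  have hpq : ‖laplaceFn p q‖ < 1 := norm_laplaceFn_lt_one hpi hppos hp1 hq
  have hdensity : laplaceFn (renewalDensity p u0) q = (1 - laplaceFn p q)⁻¹ * laplaceFn u0 q := by
    refine (hasSum_laplaceFn_renewalTerm hpi hui hp0 hu00 hq.le
      (norm_laplaceFn_lt_one hpi hppos hp1 (by simpa using hq))).unique ?_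
    simp_rw [laplaceFn_renewalTerm hpi hui hq.le]
    exact (hasSum_geometric_of_norm_lt_one hpq).mul_right _
  have hα0 : ∀ t ∈ Ici (0 : ℝ), 0 ≤ renewalDensity p u0 t := fun t ht =>
    tsum_nonneg fun i => renewalTerm_nonneg hp0 hu00 i t ht
  have hchange : ∫ s in Ici (0 : ℝ), cexp (-q * τinv s) = laplaceFn (renewalDensity p u0) q := by
    rw [setIntegral_comp_rightInverse hα0 hmono hmaps hinv₂
      (by fun_prop : Continuous fun t : ℝ => cexp (-q * t)).stronglyMeasurable]
    exact integral_congr_ae (.of_forall fun t => (Complex.real_smul ..).trans (mul_comm _ _))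
  have hne : 1 - laplaceFn p q ≠ 0 := sub_ne_zero.mpr fun h => by simp [← h] at hpq
  rw [hchange, hdensity, ← mul_assoc, mul_inv_cancel₀ hne, one_mul]

/-- With `A(τ) = ∫_0^τ α(s) ds` a strictly increasing continuous
bijection of `[0,∞)` onto itself with inverse `τ(·)`, the initial data satisfies
`û0(q) = (1 − p̂(q)) ∫_0^∞ e^{-q τ(s)} ds` for every complex `q` with `Re q > 0`. -/
theorem stmt8 (p u0 : ℝ → ℝ) (hp : MemC p) (hpc : ContinuousOn p (Set.Ici 0))
    (hu0 : MemC u0)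
    (hmono : StrictMonoOn (renewalFn p u0) (Set.Ici 0))
    (hcont : ContinuousOn (renewalFn p u0) (Set.Ici 0))
    (hbij : Set.BijOn (renewalFn p u0) (Set.Ici 0) (Set.Ici 0))
    (τinv : ℝ → ℝ) (hmaps : ∀ t ∈ Set.Ici (0 : ℝ), τinv t ∈ Set.Ici (0 : ℝ))
    (hinv₁ : ∀ s ∈ Set.Ici (0 : ℝ), τinv (renewalFn p u0 s) = s)
    (hinv₂ : ∀ t ∈ Set.Ici (0 : ℝ), renewalFn p u0 (τinv t) = t) :
    ∀ q : ℂ, 0 < q.re →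
      laplaceFn u0 q
        = (1 - laplaceFn p q)
            * ∫ s in Set.Ici (0 : ℝ), Complex.exp (-q * ((τinv s : ℝ) : ℂ)) :=
  stmt8_general p u0 hp hu0 hmono τinv hmaps hinv₂
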